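/- Let V be an indecomposable regular representation of the Kronecker quiver with dimension vector nδ, and let M = P ⊕ M′ ⊕ I with P ≠ 0 preprojective, M′ regular, I ≠ 0 preinjective and dim M = nδ. Then dim O_V > dim O_M, where O denotes the orbit in the representation variety E_{nδ} under the action of G_{nδ}. -/

import Mathlib

open scoped BigOperators

noncomputable section

/-- Abstract model of the data underlying the Ringel–Hall algebra of the
Kronecker quiver over a finite field `𝔽_q` (`v = √q`).  `P` is the set of
isomorphism classes of finite-dimensional representations, `hall M N` records
the Hall numbers `L ↦ g^L_{M N}` (the number of submodules `W ⊆ L` with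
`W ≅ N` and `L/W ≅ M`), `dimv` the dimension vector, `dsum` direct sum,
`dimHom M N = dim Hom(M,N)`, `dimExt M N = dim Ext¹(M,N)`, `dimOrb M` the
dimension of the `G`-orbit of `M` in the representation variety. -/
structure KroneckerHall where
  q : ℕ
  hq : IsPrimePow q
  v : ℝ
  hv : v ^ 2 = (q : ℝ)
  hvpos : 0 < v
  P : Type
  dimv : P → ℕ × ℕ
  zero : P
  dimv_zero : dimv zero = (0, 0)
  dimv_eq_zero : ∀ M, dimv M = (0, 0) → M = zero
  dsum : P → P → P
  dimv_dsum : ∀ M N, dimv (dsum M N) = dimv M + dimv N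
  indec : P → Prop
  regular : P → Prop
  prep : P → Prop
  prei : P → Prop
  regular_zero : regular zero
  prep_zero : prep zero
  prei_zero : prei zero
  Vprep : ℕ → P
  dimv_Vprep : ∀ n, dimv (Vprep n) = (n + 1, n)
  indec_Vprep : ∀ n, indec (Vprep n)
  prep_Vprep : ∀ n, prep (Vprep n)
  Vprei : ℕ → P
  dimv_Vprei : ∀ n, dimv (Vprei n) = (n, n + 1)
  indec_Vprei : ∀ n, indec (Vprei n)
  prei_Vprei : ∀ n, prei (Vprei n)
  /-- every nonzero preprojective class has an indecomposable preprojective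
  direct summand -/
  prep_decomp : ∀ M, prep M → M ≠ zero → ∃ i N, prep N ∧ M = dsum (Vprep i) N
  prei_decomp : ∀ M, prei M → M ≠ zero → ∃ i N, prei N ∧ M = dsum (Vprei i) N
  dimHom : P → P → ℕ
  dimExt : P → P → ℕ
  /-- `dim Hom(M,N) - dim Ext¹(M,N) = ⟨dim M, dim N⟩` -/
  homext : ∀ M N, (dimHom M N : ℤ) - dimExt M N =
    (dimv M).1 * (dimv N).1 + (dimv M).2 * (dimv N).2 - 2 * (dimv M).2 * (dimv N).1
  dimHom_dsum_left : ∀ M N L, dimHom (dsum M N) L = dimHom M L + dimHom N L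
  dimHom_dsum_right : ∀ L M N, dimHom L (dsum M N) = dimHom L M + dimHom L N
  dimHom_Vprep_self : ∀ n, dimHom (Vprep n) (Vprep n) = 1
  dimHom_Vprei_self : ∀ n, dimHom (Vprei n) (Vprei n) = 1
  /-- no nonzero maps from preinjectives to preprojectives, etc. -/
  hom_prei_prep : ∀ M N, prei M → prep N → M ≠ zero → N ≠ zero → dimHom M N = 0
  hom_prei_reg : ∀ M N, prei M → regular N → M ≠ zero → N ≠ zero → dimHom M N = 0
  hom_reg_prep : ∀ M N, regular M → prep N → M ≠ zero → N ≠ zero → dimHom M N = 0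
  ext_prep_reg : ∀ M N, prep M → regular N → dimExt M N = 0
  ext_prep_prei : ∀ M N, prep M → prei N → dimExt M N = 0
  ext_reg_prei : ∀ M N, regular M → prei N → dimExt M N = 0
  /-- an indecomposable regular module of dimension vector `nδ` has
  `n`-dimensional endomorphism ring -/
  end_indec_reg : ∀ M n, indec M → regular M → dimv M = (n, n) → dimHom M M = n
  end_reg_ge : ∀ M n, regular M → dimv M = (n, n) → n ≤ dimHom M M
  /-- dimension of the orbit `O_M ⊆ E_{dim M}`:
  `dim O_M = dim G_{dim M} - dim End(M)` -/
  dimOrb : P → ℤ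
  dimOrb_eq : ∀ M,
    dimOrb M = ((dimv M).1 ^ 2 + (dimv M).2 ^ 2 : ℤ) - dimHom M M
  hall : P → P → P →₀ ℕ
  hall_dim : ∀ M N L, (hall M N) L ≠ 0 → dimv L = dimv M + dimv N
  hall_zero_left : ∀ M, hall zero M = Finsupp.single M 1
  hall_zero_right : ∀ M, hall M zero = Finsupp.single M 1
  /-- associativity of the Hall numbers -/
  hall_assoc : ∀ M N L,
    ((hall M N).sum fun X g => g • hall X L) =
      ((hall N L).sum fun Y g => g • hall M Y)
  finite_dim : ∀ d : ℕ × ℕ, {M : P | dimv M = d}.Finite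

namespace KroneckerHall

variable (D : KroneckerHall)

/-- The underlying space of the Ringel–Hall algebra: the free module on the
set of isomorphism classes (we realise the coefficient field `ℚ(v) ⊆ ℝ`
inside `ℝ`). -/
abbrev HA := D.P →₀ ℝ

/-- basis element `u_[M]` -/
def u (M : D.P) : HA D := Finsupp.single M 1

/-- the identity `u_[0]` -/
def one : HA D := D.u D.zero

/-- `u_[M] · u_[N] = ∑_L g^L_{MN} u_[L]` as an element of `HA`. -/
def hallRow (M N : D.P) : HA D :=
  Finsupp.mapRange (fun n : ℕ => (n : ℝ)) (by simp) (D.hall M N)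

/-- the (untwisted) Hall multiplication -/
def mulH (x y : HA D) : HA D :=
  x.sum fun M a => y.sum fun N b => (a * b) • D.hallRow M N

/-- Euler form of the Kronecker quiver -/
def euler (a b : ℕ × ℕ) : ℤ :=
  (a.1 : ℤ) * b.1 + (a.2 : ℤ) * b.2 - 2 * (a.2 : ℤ) * b.1

/-- the twisted Hall multiplication `u_[M] ∗ u_[N] = v^{⟨dim M,dim N⟩} u_[M]u_[N]` -/
def tmul (x y : HA D) : HA D :=
  x.sum fun M a => y.sum fun N b =>
    (a * b * D.v ^ euler (D.dimv M) (D.dimv N)) • D.hallRow M N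

/-- regular part `R(x)` of an element of the Hall algebra -/
def rpart (x : HA D) : HA D := by
  classical exact x.filter fun M => D.regular M

/-- `R_{kδ}`: the sum of all `u_[M]` with `M` regular of dimension vector `kδ` -/
def Rdelta (k : ℕ) : HA D := by
  classical
  exact ∑ M ∈ ((D.finite_dim (k, k)).toFinset.filter fun M => D.regular M), D.u M

/-- `E_{(n+1,n)} = v^{-2n} u_{(n+1,n)}` -/
def Eprep (n : ℕ) : HA D := (D.v ^ (-(2 * n : ℤ))) • D.u (D.Vprep n)

/-- `E_{(n,n+1)} = v^{-2n} u_{(n,n+1)}` -/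
def Eprei (n : ℕ) : HA D := (D.v ^ (-(2 * n : ℤ))) • D.u (D.Vprei n)

/-- the Chevalley generator `E_1 = E_{(1,0)}` -/
def E1 : HA D := D.Eprep 0

/-- the Chevalley generator `E_2 = E_{(0,1)}` -/
def E2 : HA D := D.Eprei 0

/-- `Ẽ_{nδ} = E_{(n-1,n)} ∗ E_1 - v^{-2} E_1 ∗ E_{(n-1,n)}` -/
def Etilde (n : ℕ) : HA D :=
  D.tmul (D.Eprei (n - 1)) D.E1 - (D.v ^ (-2 : ℤ)) • D.tmul D.E1 (D.Eprei (n - 1))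

/-- the quantum integer `[k] = (v^k - v^{-k})/(v - v^{-1})` -/
def qint (k : ℕ) : ℝ := ∑ i ∈ Finset.range k, D.v ^ ((k : ℤ) - 1 - 2 * i)

/-- the quantum factorial `[m]!` -/
def qfact (m : ℕ) : ℝ := ∏ r ∈ Finset.Icc 1 m, D.qint r

/-- powers with respect to the twisted multiplication -/
def tpow (x : HA D) : ℕ → HA D
  | 0 => D.one
  | m + 1 => D.tmul x (tpow x m)

/-- divided powers `x^{(∗m)} = x^{∗m}/[m]!` -/
def dpow (x : HA D) (m : ℕ) : HA D := (D.qfact m)⁻¹ • D.tpow x m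

/-- the imaginary root vectors, defined inductively by `E_{0δ} = 1` and
`E_{kδ} = [k]⁻¹ ∑_{s=1}^k v^{s-k} Ẽ_{sδ} ∗ E_{(k-s)δ}`. -/
def Edelta : ℕ → HA D
  | 0 => D.one
  | k + 1 =>
      (D.qint (k + 1))⁻¹ •
        ∑ s ∈ Finset.range (k + 1),
          (D.v ^ ((s : ℤ) - k)) • D.tmul (D.Etilde (s + 1)) (Edelta (k - s))
  decreasing_by omega

end KroneckerHall

end
/-!
Let `M = P ⊕ R ⊕ I` with dimension vectors `p, r, i`. Since `dim Ext¹ ≥ 0`, every `Hom` space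
between summands has dimension at least the Euler form of their dimension vectors, and trivially
at least `0`. Using the first bound on the diagonal and "forward" pairs and the second on the
"backward" pairs `(R,P), (I,P), (I,R)` gives `dim End M ≥ ⟨p,p⟩ + ⟨p,r+i⟩ + ⟨r,r⟩ + ⟨r,i⟩ + ⟨i,i⟩`.
With `s = p₁ - p₂ ≥ 1` and `t = i₂ - i₁ ≥ 1`, and `p + r + i = nδ`, this sum is at least
`n · min(s,t) + (s² + (s - t)² + t²) / 2 > n = dim End V`.
-/

namespace KroneckerHall

def eulerUpperSum (p r i : ℕ × ℕ) : ℤ :=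
  euler p p + euler p (r + i) + euler r r + euler r i + euler i i

theorem lt_eulerUpperSum_of_add_eq (n : ℕ) {p r i : ℕ × ℕ} (hp : p.2 < p.1) (hi : i.1 < i.2)
    (hsum : p + r + i = (n, n)) :
    (n : ℤ) < eulerUpperSum p r i := by
  obtain ⟨p₁, p₂⟩ := p
  obtain ⟨r₁, r₂⟩ := r
  obtain ⟨i₁, i₂⟩ := i
  simp only [Prod.mk_add_mk, Prod.mk.injEq] at hsum hp hi
  simp only [eulerUpperSum, euler, Prod.fst_add, Prod.snd_add]
  zify at hsum hp hi ⊢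
  obtain ⟨hsum₁, hsum₂⟩ := hsum
  have hr₁ : (0 : ℤ) ≤ r₁ := by positivity
  rcases le_total ((p₁ : ℤ) - p₂) ((i₂ : ℤ) - i₁) with h | h
  · nlinarith [mul_nonneg hr₁ (by linarith : (0 : ℤ) ≤ (i₂ : ℤ) - i₁),
      mul_nonneg (by positivity : (0 : ℤ) ≤ i₁) (by linarith : (0 : ℤ) ≤ ((i₂ : ℤ) - i₁) - (p₁ - p₂))]
  · nlinarith [mul_nonneg hr₁ (by linarith : (0 : ℤ) ≤ (p₁ : ℤ) - p₂),
      mul_nonneg (by positivity : (0 : ℤ) ≤ p₁) (by linarith : (0 : ℤ) ≤ ((p₁ : ℤ) - p₂) - (i₂ - i₁))]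

variable (D : KroneckerHall)

theorem euler_le_dimHom (M N : D.P) : euler (D.dimv M) (D.dimv N) ≤ D.dimHom M N := by
  have h := D.homext M N
  unfold euler
  omega

theorem euler_add_dimHom_le_dimHom_dsum (X Y : D.P) :
    euler (D.dimv X) (D.dimv X) + euler (D.dimv X) (D.dimv Y) + D.dimHom Y Y ≤
      D.dimHom (D.dsum X Y) (D.dsum X Y) := by
  have hXX := D.euler_le_dimHom X X
  have hXY := D.euler_le_dimHom X Y
  simp only [D.dimHom_dsum_left, D.dimHom_dsum_right]
  push_cast
  omega

theorem eulerUpperSum_le_dimHom_dsum_dsum (X Y Z : D.P) :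
    eulerUpperSum (D.dimv X) (D.dimv Y) (D.dimv Z) ≤
      D.dimHom (D.dsum X (D.dsum Y Z)) (D.dsum X (D.dsum Y Z)) := by
  have hX := D.euler_add_dimHom_le_dimHom_dsum X (D.dsum Y Z)
  have hY := D.euler_add_dimHom_le_dimHom_dsum Y Z
  have hZ := D.euler_le_dimHom Z Z
  rw [D.dimv_dsum] at hX
  unfold eulerUpperSum
  linarith

theorem dimv_snd_lt_fst_of_prep {M : D.P} (hM : D.prep M) (h0 : M ≠ D.zero) :
    (D.dimv M).2 < (D.dimv M).1 := by
  induction hk : (D.dimv M).1 using Nat.strong_induction_on generalizing M with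
  | _ k ih =>
  obtain ⟨j, N, hN, hMN⟩ := D.prep_decomp M hM h0
  have hd : D.dimv M = D.dimv (D.Vprep j) + D.dimv N := by rw [hMN, D.dimv_dsum]
  rw [D.dimv_Vprep, Prod.ext_iff] at hd
  simp only [Prod.fst_add, Prod.snd_add] at hd
  by_cases hN0 : N = D.zero
  · simp only [hN0, D.dimv_zero] at hd
    omega
  · have := ih _ (by omega) hN hN0 rfl
    omega

theorem dimv_fst_lt_snd_of_prei {M : D.P} (hM : D.prei M) (h0 : M ≠ D.zero) :
    (D.dimv M).1 < (D.dimv M).2 := by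
  induction hk : (D.dimv M).2 using Nat.strong_induction_on generalizing M with
  | _ k ih =>
  obtain ⟨j, N, hN, hMN⟩ := D.prei_decomp M hM h0
  have hd : D.dimv M = D.dimv (D.Vprei j) + D.dimv N := by rw [hMN, D.dimv_dsum]
  rw [D.dimv_Vprei, Prod.ext_iff] at hd
  simp only [Prod.fst_add, Prod.snd_add] at hd
  by_cases hN0 : N = D.zero
  · simp only [hN0, D.dimv_zero] at hd
    omega
  · have := ih _ (by omega) hN hN0 rfl
    omega

end KroneckerHall

theorem kroneckerHall_orbit_dim_indec_regular_gt_general (D : KroneckerHall) (n : ℕ)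
    (V M P R I : D.P)
    (hVind : D.indec V) (hVreg : D.regular V) (hVdim : D.dimv V = (n, n))
    (hM : M = D.dsum P (D.dsum R I))
    (hP : D.prep P) (hP0 : P ≠ D.zero)
    (hI : D.prei I) (hI0 : I ≠ D.zero)
    (hMdim : D.dimv M = (n, n)) :
    D.dimOrb M < D.dimOrb V := by
  have hsum : D.dimv P + D.dimv R + D.dimv I = (n, n) := by
    rw [← hMdim, hM, D.dimv_dsum, D.dimv_dsum, add_assoc]
  have hEnd : (n : ℤ) < D.dimHom M M :=
    calc (n : ℤ)
      _ < KroneckerHall.eulerUpperSum (D.dimv P) (D.dimv R) (D.dimv I) :=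
        KroneckerHall.lt_eulerUpperSum_of_add_eq n (D.dimv_snd_lt_fst_of_prep hP hP0)
          (D.dimv_fst_lt_snd_of_prei hI hI0) hsum
      _ ≤ D.dimHom M M := hM ▸ D.eulerUpperSum_le_dimHom_dsum_dsum P R I
  rw [D.dimOrb_eq, D.dimOrb_eq, hMdim, hVdim, D.end_indec_reg V n hVind hVreg hVdim]
  linarith

/-- **Lemma 4.5.** Let `V` be an indecomposable regular representation of the
Kronecker quiver with dimension vector `nδ`, and let `M = P ⊕ M′ ⊕ I` with
`P ≠ 0` preprojective, `M′` regular, `I ≠ 0` preinjective, and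
`dim M = nδ`.  Then `dim O_V > dim O_M`, where `O` denotes the orbit in the
representation variety `E_{nδ}` under the action of `G_{nδ}`. -/
theorem kroneckerHall_orbit_dim_indec_regular_gt (D : KroneckerHall) (n : ℕ)
    (V M P R I : D.P)
    (hVind : D.indec V) (hVreg : D.regular V) (hVdim : D.dimv V = (n, n))
    (hM : M = D.dsum P (D.dsum R I))
    (hP : D.prep P) (hP0 : P ≠ D.zero)
    (hR : D.regular R)
    (hI : D.prei I) (hI0 : I ≠ D.zero)
    (hMdim : D.dimv M = (n, n)) :
    D.dimOrb M < D.dimOrb V :=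
  kroneckerHall_orbit_dim_indec_regular_gt_general D n V M P R I hVind hVreg hVdim hM hP hP0 hI hI0
    hMdim
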